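/- For every integer a ≥ 2, the genus of S(a), i.e. the cardinality of ℕ \ S(a), equals Σ_{x=1}^{l_a − 1} β(x). -/

import Mathlib

/-- The Lucas sequence: l 0 = 2, l 1 = 1, l (n+2) = l (n+1) + l n. -/
def lucas : ℕ → ℕ
  | 0 => 2
  | 1 => 1
  | n + 2 => lucas (n + 1) + lucas n

/-- The modified (monotone) Lucas sequence: l̃ 0 = 1, l̃ 1 = 2, l̃ n = l n for n ≥ 2. -/
def ltil : ℕ → ℕ
  | 0 => 1
  | 1 => 2
  | n + 2 => lucas (n + 2)

/-- β x : minimal number of summands in a representation of x as a sum of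
modified Lucas numbers (with repetitions allowed). -/
noncomputable def beta (x : ℕ) : ℕ :=
  sInf {s : ℕ | ∃ k : ℕ, ∃ b : ℕ → ℕ,
    x = ∑ i ∈ Finset.range (k + 1), b i * ltil i ∧ s = ∑ i ∈ Finset.range (k + 1), b i}

/-- γ x : the greatest k with l̃ k ≤ x (for x ≥ 1). -/
noncomputable def gamma (x : ℕ) : ℕ := sSup {k : ℕ | ltil k ≤ x}

/-- S a : the additive submonoid of ℕ generated by {l_a} ∪ {l_a + l_n : n ∈ ℕ}. -/
def Sset (a : ℕ) : AddSubmonoid ℕ :=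
  AddSubmonoid.closure ({lucas a} ∪ {x : ℕ | ∃ n : ℕ, x = lucas a + lucas n})

/-- T a : the additive submonoid of ℕ generated by {l_a + l_n : n ∈ ℕ}. -/
def Tset (a : ℕ) : AddSubmonoid ℕ :=
  AddSubmonoid.closure {x : ℕ | ∃ n : ℕ, x = lucas a + lucas n}

/-!
Write `x = q l_a + r` with `r < l_a`. Then `x ∈ S(a)` if and only if `β(r) ≤ q`, so the gaps of
`S(a)` congruent to `r` are the `β(r)` numbers `q l_a + r` with `q < β(r)`.

If `β(r) ≤ q`, pair each of the `β(r)` Lucas numbers summing to `r` with a copy of `l_a`.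
Conversely, the numbers with `β(r) ≤ q` contain the generators of `S(a)` (those with `n ≥ a` via
the Lucas recurrence) and are closed under addition. The latter reduces to: if `s` is a sum of `k`
numbers `l̃_i` with `i < a`, then `β(s mod l_a) + ⌊s / l_a⌋ ≤ k`. To see this, rewrite the
summands: a pair with sum at least `l_a` gives off one `l_a` and leaves at most one summand, and a
pair of equal or adjacent indices (or `{0, 2}`) merges into one summand, or into two of larger
index. This terminates, and once no pair can be rewritten the indices are pairwise apart, so, as
for Zeckendorf representations, `s < l_a`.
-/

open Multiset

lemma lucas_pos : ∀ n, 0 < lucas n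
  | 0 => by decide
  | 1 => by decide
  | n + 2 => Nat.add_pos_left (lucas_pos (n + 1)) _

lemma lucas_eq_ltil_swap (n : ℕ) : lucas n = ltil (Equiv.swap 0 1 n) := by
  match n with
  | 0 => rfl
  | 1 => rfl
  | n + 2 => rw [Equiv.swap_apply_of_ne_of_ne (by omega) (by omega)]; rfl

lemma ltil_eq_lucas_swap (n : ℕ) : ltil n = lucas (Equiv.swap 0 1 n) := by
  rw [lucas_eq_ltil_swap, Equiv.swap_apply_self]

lemma ltil_eq_lucas {n : ℕ} (hn : 2 ≤ n) : ltil n = lucas n := by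
  rw [ltil_eq_lucas_swap, Equiv.swap_apply_of_ne_of_ne (by omega) (by omega)]

lemma ltil_add_two {n : ℕ} (hn : n ≠ 1) : ltil (n + 2) = ltil (n + 1) + ltil n := by
  match n, hn with
  | 0, _ => rfl
  | n + 2, _ => rfl

lemma ltil_pos (n : ℕ) : 0 < ltil n := ltil_eq_lucas_swap n ▸ lucas_pos _

lemma ltil_strictMono : StrictMono ltil := by
  refine strictMono_nat_of_lt_succ fun n => ?_
  match n with
  | 0 | 1 | 2 => decide
  | n + 3 =>
    rw [ltil_add_two (by omega : n + 2 ≠ 1)]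
    exact Nat.lt_add_of_pos_right (ltil_pos _)

lemma lucas_lt_lucas {a n : ℕ} (ha : 2 ≤ a) (hn : n < a) : lucas n < lucas a := by
  rw [lucas_eq_ltil_swap, ← ltil_eq_lucas ha]
  refine ltil_strictMono ?_
  rcases n with _ | _ | n
  · simp only [Equiv.swap_apply_left]; omega
  · simp only [Equiv.swap_apply_right]; omega
  · rwa [Equiv.swap_apply_of_ne_of_ne (by omega) (by omega)]

lemma lt_of_sum_ltil_lt {a : ℕ} {r : Multiset ℕ} (h : (r.map ltil).sum < ltil a) :
    ∀ m ∈ r, m < a := fun _ hm =>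
  ltil_strictMono.lt_iff_lt.1 <| (le_sum_of_mem (mem_map_of_mem ltil hm)).trans_lt h

lemma beta_le_card (L : Multiset ℕ) : beta (L.map ltil).sum ≤ card L := by
  classical
  obtain ⟨k, hk⟩ : ∃ k, ∀ i ∈ L, i ∈ Finset.range (k + 1) :=
    ⟨L.sum, fun i hi => Finset.mem_range_succ_iff.2 (le_sum_of_mem hi)⟩
  refine Nat.sInf_le ⟨k, L.count, ?_, (sum_count_eq_card hk).symm⟩
  rw [Finset.sum_multiset_map_count]
  refine Finset.sum_subset (fun i hi => hk i (mem_toFinset.1 hi)) fun i _ hi => ?_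
  rw [count_eq_zero.2 (mt mem_toFinset.2 hi), zero_smul]

lemma exists_card_eq_beta (x : ℕ) : ∃ L : Multiset ℕ, (L.map ltil).sum = x ∧ card L = beta x := by
  obtain ⟨k, b, hx, hb⟩ := Nat.sInf_mem (s := {s : ℕ | ∃ k : ℕ, ∃ b : ℕ → ℕ,
    x = ∑ i ∈ Finset.range (k + 1), b i * ltil i ∧ s = ∑ i ∈ Finset.range (k + 1), b i})
    ⟨x, 0, fun _ => x, by simp [ltil], rfl⟩
  subst hx
  refine ⟨(Finset.range (k + 1)).val.bind fun i => replicate (b i) i, ?_, .trans ?_ hb.symm⟩ <;>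
    simp [map_bind, sum_bind, Finset.sum_eq_multiset_sum]

lemma beta_zero : beta 0 = 0 :=
  Nat.le_zero.1 (beta_le_card 0)

-- `i + j ≠ 2` excludes the pair `{0, 2}`, since `ltil 0 + ltil 2 = ltil 3`.
def Apart (i j : ℕ) : Prop := (i + 2 ≤ j ∨ j + 2 ≤ i) ∧ i + j ≠ 2

def Simplifies (r : Multiset ℕ) (i j : ℕ) : Prop :=
  card r ≤ 1 ∨ card r = 2 ∧ 2 ^ i + 2 ^ j < (r.map (2 ^ ·)).sum

lemma Simplifies.symm {r : Multiset ℕ} {i j : ℕ} (h : Simplifies r i j) : Simplifies r j i := by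
  unfold Simplifies at *; omega

lemma exists_merge_self (i : ℕ) :
    ∃ r : Multiset ℕ, (r.map ltil).sum = ltil i + ltil i ∧ Simplifies r i i := by
  match i with
  | 0 => exact ⟨{1}, by decide, .inl (by decide)⟩
  | 1 => exact ⟨{3}, by decide, .inl (by decide)⟩
  | 2 => exact ⟨{3, 1}, by decide, .inr (by decide)⟩
  | 3 => exact ⟨{4, 0}, by decide, .inr (by decide)⟩
  | i + 4 =>
    -- `2 ltil k = ltil (k + 1) + ltil (k - 2)` for `k ≥ 4`
    refine ⟨{i + 5, i + 2}, ?_, .inr ⟨rfl, ?_⟩⟩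
    · have h5 : ltil (i + 5) = ltil (i + 4) + ltil (i + 3) := ltil_add_two (by omega)
      have h4 : ltil (i + 4) = ltil (i + 3) + ltil (i + 2) := ltil_add_two (by omega)
      simp only [insert_eq_cons, map_cons, map_singleton,
        sum_cons, sum_singleton]
      omega
    · simp only [insert_eq_cons, map_cons, map_singleton,
        sum_cons, sum_singleton]
      have := Nat.two_pow_pos (i + 2)
      rw [pow_succ 2 (i + 4)]
      omega

lemma exists_merge_succ (i : ℕ) :
    ∃ r : Multiset ℕ, (r.map ltil).sum = ltil i + ltil (i + 1) ∧ Simplifies r i (i + 1) := by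
  match i with
  | 0 => exact ⟨{2}, by decide, .inl (by decide)⟩
  | 1 => exact ⟨{3, 0}, by decide, .inr (by decide)⟩
  | i + 2 =>
    refine ⟨{i + 4}, ?_, .inl (by simp)⟩
    simp [ltil_add_two (show i + 2 ≠ 1 by omega), add_comm]

lemma exists_merge {i j : ℕ} (h : ¬ Apart i j) :
    ∃ r : Multiset ℕ, (r.map ltil).sum = ltil i + ltil j ∧ Simplifies r i j := by
  have : j = i ∨ j = i + 1 ∨ i = j + 1 ∨ (i = 0 ∧ j = 2) ∨ (i = 2 ∧ j = 0) := by
    unfold Apart at h; omega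
  rcases this with rfl | rfl | rfl | ⟨rfl, rfl⟩ | ⟨rfl, rfl⟩
  · exact exists_merge_self _
  · exact exists_merge_succ _
  · obtain ⟨r, hr, hs⟩ := exists_merge_succ j
    exact ⟨r, hr.trans (add_comm _ _), hs.symm⟩
  · exact ⟨{3}, by decide, .inl (by decide)⟩
  · exact ⟨{3}, by decide, .inl (by decide)⟩

lemma exists_extract {a i j : ℕ} (ha : 2 ≤ a) (hi : i < a) (hj : j < a)
    (h : ltil a ≤ ltil i + ltil j) :
    ∃ r : Multiset ℕ, card r ≤ 1 ∧ (r.map ltil).sum + ltil a = ltil i + ltil j := by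
  wlog hji : j ≤ i generalizing i j
  · obtain ⟨r, hr, hs⟩ := this hj hi (by omega) (by omega)
    exact ⟨r, hr, hs.trans (add_comm _ _)⟩
  obtain ha4 | ⟨b, rfl⟩ : a ≤ 4 ∨ ∃ b, a = b + 5 := by
    rcases le_or_gt a 4 with h | h
    exacts [.inl h, .inr ⟨a - 5, by omega⟩]
  · interval_cases a <;> interval_cases i <;> interval_cases j <;>
      first
        | exact absurd h (by decide)
        | exact ⟨0, by decide, by decide⟩
        | exact ⟨{0}, by decide, by decide⟩
        | exact ⟨{1}, by decide, by decide⟩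
  · have h5 : ltil (b + 5) = ltil (b + 4) + ltil (b + 3) := ltil_add_two (by omega)
    have h4 : ltil (b + 4) = ltil (b + 3) + ltil (b + 2) := ltil_add_two (by omega)
    have hi : i = b + 4 := by
      by_contra hne
      have := ltil_strictMono.monotone (show i ≤ b + 3 by omega)
      have := ltil_strictMono.monotone (show j ≤ b + 3 by omega)
      have := ltil_pos (b + 2)
      omega
    subst hi
    have hj : j = b + 3 ∨ j = b + 4 := by
      by_contra hne
      have := ltil_strictMono.monotone (show j ≤ b + 2 by omega)
      have := ltil_strictMono (show b + 2 < b + 3 by omega)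
      omega
    rcases hj with rfl | rfl
    · exact ⟨0, by simp, by simpa using h5⟩
    · exact ⟨{b + 2}, by simp, by simp; omega⟩

lemma sum_ltil_lt_of_apart (m : ℕ) (L : Multiset ℕ) (hm : ∀ i ∈ L, i < m)
    (hL : ∀ i j, {i, j} ≤ L → Apart i j) : (L.map ltil).sum < ltil m := by
  induction m using Nat.strong_induction_on generalizing L with
  | _ m ih =>
  rcases m with _ | k
  · simp [eq_zero_of_forall_notMem fun i hi => (hm i hi).not_ge (Nat.zero_le i), ltil]
  by_cases hk : k ∈ L
  · obtain ⟨rest, rfl⟩ := exists_cons_of_mem hk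
    have hrest : ∀ i ∈ rest, i + 2 ≤ k ∧ k + i ≠ 2 := fun i hi => by
      have := hL k i (cons_le_cons k (singleton_le.2 hi))
      have := hm i (mem_cons_of_mem hi)
      unfold Apart at *; omega
    have hL' : ∀ i j, {i, j} ≤ rest → Apart i j :=
      fun i j h => hL i j (h.trans (le_cons_self rest k))
    rw [map_cons, sum_cons]
    rcases eq_or_ne k 2 with rfl | hk2
    · rw [eq_zero_of_forall_notMem (s := rest) fun i hi => by have := hrest i hi; omega]
      decide
    · have hrec : ltil k + ltil (k - 1) ≤ ltil (k + 1) := by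
        rcases k with _ | _ | _ | k
        · decide
        · decide
        · exact absurd rfl hk2
        · exact (ltil_add_two (by omega)).ge
      have := ih (k - 1) (by omega) rest (fun i hi => by have := hrest i hi; omega) hL'
      omega
  · have := ih k (by omega) L (fun i hi => (Nat.le_of_lt_succ (hm i hi)).lt_of_ne
      (by rintro rfl; exact hk hi)) hL
    exact this.trans (ltil_strictMono (Nat.lt_succ_self k))

/-- Each index below `a` contributes more than `2 ^ a`, so the potential drops whenever a pair of
indices below `a` is replaced by indices below `a` that simplify it. -/
def potential (a : ℕ) (L : Multiset ℕ) : ℕ := (L.map fun i => 2 ^ (a + 1) - 2 ^ i).sum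

lemma potential_lt_of_simplifies {a x y : ℕ} {r : Multiset ℕ} (hx : x < a) (hy : y < a)
    (hr : ∀ m ∈ r, m < a) (h : Simplifies r x y) : potential a r < potential a {x, y} := by
  have hpow {m : ℕ} (hm : m < a) : 2 ^ m < 2 ^ a := Nat.pow_lt_pow_right one_lt_two hm
  have hx := hpow hx
  have hy := hpow hy
  have h2a : 2 ^ (a + 1) = 2 * 2 ^ a := by ring
  rcases h with h | ⟨h, hw⟩
  · rcases Nat.le_one_iff_eq_zero_or_eq_one.1 h with h | h
    · simp [potential, card_eq_zero.1 h]
      omega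
    · obtain ⟨m, rfl⟩ := card_eq_one.1 h
      simp [potential]
      have := Nat.one_le_two_pow (n := m)
      omega
  · obtain ⟨m, n, rfl⟩ := card_eq_two.1 h
    have hm := hpow (hr m (by simp))
    have hn := hpow (hr n (by simp))
    simp [potential] at hw ⊢
    omega

lemma exists_lower_potential_of_replace {a x y q : ℕ} {L r : Multiset ℕ}
    (hL : ∀ i ∈ L, i < a) (hxy : {x, y} ≤ L)
    (hsum : (r.map ltil).sum + q * ltil a = ltil x + ltil y) (hq : q ≤ 1)
    (hcard : card r + q ≤ 2) (hlt : (r.map ltil).sum < ltil a) (hsimp : Simplifies r x y) :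
    ∃ L' : Multiset ℕ, (∀ i ∈ L', i < a) ∧ potential a L' < potential a L ∧
      ∃ q ≤ 1, (L'.map ltil).sum + q * ltil a = (L.map ltil).sum ∧ card L' + q ≤ card L := by
  obtain ⟨rest, rfl⟩ : ∃ rest, L = x ::ₘ y ::ₘ rest := by
    obtain ⟨u, rfl⟩ := exists_add_of_le hxy
    exact ⟨u, by simp⟩
  have hr := lt_of_sum_ltil_lt hlt
  have hpot := potential_lt_of_simplifies (hL x (by simp)) (hL y (by simp)) hr hsimp
  refine ⟨r + rest, fun i hi => ?_, ?_, q, hq, ?_, ?_⟩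
  · rcases mem_add.1 hi with h | h
    exacts [hr i h, hL i (by simp [h])]
  · simp only [potential, Multiset.map_add, Multiset.sum_add, map_cons, sum_cons, insert_eq_cons,
      map_singleton, sum_singleton] at hpot ⊢
    omega
  · simp only [Multiset.map_add, Multiset.sum_add, map_cons, sum_cons]
    omega
  · simp only [Multiset.card_add, card_cons]
    omega

lemma exists_lower_potential {a : ℕ} (ha : 2 ≤ a) {L : Multiset ℕ} (hL : ∀ i ∈ L, i < a)
    (hs : ltil a ≤ (L.map ltil).sum) :
    ∃ L' : Multiset ℕ, (∀ i ∈ L', i < a) ∧ potential a L' < potential a L ∧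
      ∃ q ≤ 1, (L'.map ltil).sum + q * ltil a = (L.map ltil).sum ∧ card L' + q ≤ card L := by
  have hmem {x y : ℕ} (hxy : {x, y} ≤ L) : x < a ∧ y < a :=
    ⟨hL x (mem_of_le hxy (by simp)), hL y (mem_of_le hxy (by simp))⟩
  by_cases hbig : ∃ x y, {x, y} ≤ L ∧ ltil a ≤ ltil x + ltil y
  · obtain ⟨x, y, hxy, hge⟩ := hbig
    obtain ⟨hx, hy⟩ := hmem hxy
    obtain ⟨r, hr, hrs⟩ := exists_extract ha hx hy hge
    have := ltil_strictMono hx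
    have := ltil_strictMono hy
    exact exists_lower_potential_of_replace hL hxy (by simpa using hrs) le_rfl (by omega)
      (by omega) (.inl hr)
  by_cases hmerge : ∃ x y, {x, y} ≤ L ∧ ¬ Apart x y
  · obtain ⟨x, y, hxy, hna⟩ := hmerge
    obtain ⟨r, hrs, hsimp⟩ := exists_merge hna
    have hlt : ltil x + ltil y < ltil a := not_le.1 fun h => hbig ⟨x, y, hxy, h⟩
    exact exists_lower_potential_of_replace hL hxy (by simpa using hrs) zero_le_one
      (by unfold Simplifies at hsimp; omega) (hrs ▸ hlt) hsimp
  push Not at hmerge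
  exact absurd hs (not_le.2 (sum_ltil_lt_of_apart a L hL hmerge))

theorem beta_mod_add_div_le_card {a : ℕ} (ha : 2 ≤ a) (L : Multiset ℕ) (hL : ∀ i ∈ L, i < a) :
    beta ((L.map ltil).sum % ltil a) + (L.map ltil).sum / ltil a ≤ card L := by
  induction hP : potential a L using Nat.strong_induction_on generalizing L with
  | _ n ih =>
  subst hP
  by_cases hs : (L.map ltil).sum < ltil a
  · rw [Nat.mod_eq_of_lt hs, Nat.div_eq_of_lt hs, add_zero]
    exact beta_le_card L
  obtain ⟨L', hL', hP, q, hq, hsum, hcard⟩ := exists_lower_potential ha hL (not_lt.1 hs)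
  have := ih _ hP L' hL' rfl
  rw [← hsum, Nat.add_mul_mod_self_right, Nat.add_mul_div_right _ _ (ltil_pos a)]
  omega

lemma beta_mod_le_div_add {a x y : ℕ} (ha : 2 ≤ a) (hx : beta (x % lucas a) ≤ x / lucas a)
    (hy : beta (y % lucas a) ≤ y / lucas a) :
    beta ((x + y) % lucas a) ≤ (x + y) / lucas a := by
  rw [← ltil_eq_lucas ha] at *
  obtain ⟨Lx, hLx, hcx⟩ := exists_card_eq_beta (x % ltil a)
  obtain ⟨Ly, hLy, hcy⟩ := exists_card_eq_beta (y % ltil a)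
  have hlt {L : Multiset ℕ} {z : ℕ} (h : (L.map ltil).sum = z % ltil a) : ∀ i ∈ L, i < a :=
    lt_of_sum_ltil_lt (h ▸ Nat.mod_lt _ (ltil_pos a))
  have key := beta_mod_add_div_le_card ha (Lx + Ly) fun i hi =>
    (mem_add.1 hi).elim (hlt hLx i) (hlt hLy i)
  rw [Multiset.map_add, Multiset.sum_add, Multiset.card_add, hLx, hLy, hcx, hcy] at key
  have hxy : x + y = (x % ltil a + y % ltil a) + (x / ltil a + y / ltil a) * ltil a := by
    have := Nat.mod_add_div x (ltil a)
    have := Nat.mod_add_div y (ltil a)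
    linarith
  rw [hxy, Nat.add_mul_mod_self_right, Nat.add_mul_div_right _ _ (ltil_pos a)]
  calc beta ((x % ltil a + y % ltil a) % ltil a)
      ≤ beta ((x % ltil a + y % ltil a) % ltil a) + (x % ltil a + y % ltil a) / ltil a :=
        Nat.le_add_right _ _
    _ ≤ beta (x % ltil a) + beta (y % ltil a) := key
    _ ≤ x / ltil a + y / ltil a := add_le_add hx hy
    _ ≤ _ := Nat.le_add_left _ _

def betaSubmonoid {a : ℕ} (ha : 2 ≤ a) : AddSubmonoid ℕ where
  carrier := {x | beta (x % lucas a) ≤ x / lucas a}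
  zero_mem' := by simp [beta_zero]
  add_mem' := beta_mod_le_div_add ha

lemma lucas_add_lucas_mem_betaSubmonoid_of_lt {a n : ℕ} (ha : 2 ≤ a) (hn : n < a) :
    lucas a + lucas n ∈ betaSubmonoid ha := by
  show beta _ ≤ _
  rw [Nat.add_mod_left, Nat.mod_eq_of_lt (lucas_lt_lucas ha hn),
    Nat.add_div_left _ (lucas_pos a), Nat.div_eq_of_lt (lucas_lt_lucas ha hn),
    lucas_eq_ltil_swap]
  simpa using beta_le_card {Equiv.swap 0 1 n}

lemma lucas_mem_betaSubmonoid {a : ℕ} (ha : 2 ≤ a) (n : ℕ) (hn : a ≤ n) :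
    lucas n ∈ betaSubmonoid ha := by
  induction n using Nat.strong_induction_on with
  | _ n ih =>
  rcases hn.eq_or_lt with rfl | hlt
  · show beta _ ≤ _
    simp [Nat.div_self (lucas_pos _), beta_zero]
  rcases (Nat.succ_le_of_lt hlt).eq_or_lt with rfl | hlt'
  · obtain ⟨b, rfl⟩ : ∃ b, a = b + 1 := ⟨a - 1, by omega⟩
    exact lucas_add_lucas_mem_betaSubmonoid_of_lt ha (Nat.lt_succ_self b)
  obtain ⟨m, rfl⟩ : ∃ m, n = m + 2 := ⟨n - 2, by omega⟩
  exact add_mem (ih (m + 1) (by omega) (by omega)) (ih m (by omega) (by omega))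

lemma Sset_le_betaSubmonoid {a : ℕ} (ha : 2 ≤ a) : Sset a ≤ betaSubmonoid ha := by
  refine AddSubmonoid.closure_le.2 ?_
  rintro _ (rfl | ⟨n, rfl⟩)
  · exact lucas_mem_betaSubmonoid ha a le_rfl
  rcases lt_or_ge n a with hn | hn
  · exact lucas_add_lucas_mem_betaSubmonoid_of_lt ha hn
  · exact add_mem (lucas_mem_betaSubmonoid ha a le_rfl) (lucas_mem_betaSubmonoid ha n hn)

lemma betaSubmonoid_le_Sset {a : ℕ} (ha : 2 ≤ a) : betaSubmonoid ha ≤ Sset a := by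
  intro x (hx : beta _ ≤ _)
  obtain ⟨L, hL, hcard⟩ := exists_card_eq_beta (x % lucas a)
  have hla : lucas a ∈ Sset a := AddSubmonoid.subset_closure (.inl rfl)
  have hgen : ∀ i ∈ L, lucas a + ltil i ∈ Sset a := fun i _ =>
    AddSubmonoid.subset_closure (.inr ⟨Equiv.swap 0 1 i, by rw [ltil_eq_lucas_swap]⟩)
  have hx : x = (L.map (lucas a + ltil ·)).sum + (x / lucas a - card L) • lucas a := by
    rw [sum_map_add, map_const', sum_replicate, hL, add_right_comm, ← add_smul,
      Nat.add_sub_cancel' (hcard ▸ hx), smul_eq_mul, Nat.div_add_mod']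
  rw [hx]
  exact add_mem (AddSubmonoid.multiset_sum_mem _ _ (by simpa using hgen))
    (AddSubmonoid.nsmul_mem _ hla _)

lemma mem_Sset_iff {a : ℕ} (ha : 2 ≤ a) (x : ℕ) :
    x ∈ Sset a ↔ beta (x % lucas a) ≤ x / lucas a :=
  ⟨fun h => Sset_le_betaSubmonoid ha h, fun h => betaSubmonoid_le_Sset ha h⟩

lemma ncard_setOf_div_lt_mod {m : ℕ} (hm : 0 < m) (f : ℕ → ℕ) :
    {x : ℕ | x / m < f (x % m)}.ncard = ∑ r ∈ Finset.range m, f r := by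
  have decode {r q : ℕ} (hr : r < m) : (r + m * q) / m = q ∧ (r + m * q) % m = r :=
    (Nat.div_mod_unique hm).2 ⟨rfl, hr⟩
  have hset : {x : ℕ | x / m < f (x % m)} =
      ((Finset.range m).sigma fun r => Finset.range (f r)).image fun p => p.1 + m * p.2 := by
    ext x
    simp only [Set.mem_ofPred_eq, Finset.coe_image, Set.mem_image, Finset.mem_coe,
      Finset.mem_sigma, Finset.mem_range, Sigma.exists]
    constructor
    · exact fun hx => ⟨x % m, x / m, ⟨Nat.mod_lt x hm, hx⟩, Nat.mod_add_div x m⟩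
    · rintro ⟨r, q, ⟨hr, hq⟩, rfl⟩
      rwa [(decode hr).1, (decode hr).2]
  rw [hset, Set.ncard_coe_finset, Finset.card_image_of_injOn, Finset.card_sigma]
  · simp
  rintro ⟨r, q⟩ hrq ⟨r', q'⟩ hrq' h
  simp only [Finset.coe_sigma, Set.mem_sigma_iff, Finset.mem_coe, Finset.mem_range] at hrq hrq' h
  obtain ⟨hq, hr⟩ := decode hrq.1
  rw [h, (decode hrq'.1).1, (decode hrq'.1).2] at *
  rw [hq, hr]

theorem genus_S_eq_sum_beta (a : ℕ) (ha : 2 ≤ a) :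
    {x : ℕ | x ∉ Sset a}.ncard = ∑ x ∈ Finset.Ico 1 (lucas a), beta x := by
  have hgaps : {x : ℕ | x ∉ Sset a} = {x | x / lucas a < beta (x % lucas a)} := by
    ext x
    simp [mem_Sset_iff ha]
  rw [hgaps, ncard_setOf_div_lt_mod (lucas_pos a), Finset.sum_range_eq_add_Ico _ (lucas_pos a),
    beta_zero, zero_add]
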